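/- arXiv:1806.03170 — 9 statements merged into one kernel-verified Lean document; each statement's English description precedes it below -/
import Mathlib

section
/- Let (N, v) be a simple game with n players, with collection of winning coalitions 𝒲 and collection of losing coalitions 𝓛. Then there exists a vector p ∈ Q(𝒲) (i.e., p ≥ 0 and p(C) ≥ 1 for every winning coalition C) such that p(C) ≤ n/4 for every losing coalition C. Equivalently, the critical threshold value α = min_{p ∈ Q(𝒲)} max_{C ∈ 𝓛} p(C) is at most n/4. -/
/-!
Let `ℓ` be the Euclidean projection of the all-ones vector onto the convex hull of the incidence
vectors of the losing coalitions, and `p := 𝟙 - ℓ`. Every losing coalition misses a member of a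
winning coalition `W`, so `ℓ(W) ≤ |W| - 1`, i.e. `p(W) ≥ 1`. For a losing `L`, the variational
inequality of the projection, `⟪p, 𝟙_L - ℓ⟫ ≤ 0`, gives `p(L) ≤ ∑ ℓᵢ (1 - ℓᵢ) ≤ n / 4`.
-/

open Finset

section
variable {E : Type*} [NormedAddCommGroup E] [InnerProductSpace ℝ E]

theorem exists_mem_convexHull_forall_inner_sub_nonpos {s : Set E} (hs : s.Finite)
    (hne : s.Nonempty) (u : E) :
    ∃ v ∈ convexHull ℝ s, ∀ w ∈ convexHull ℝ s, inner ℝ (u - v) (w - v) ≤ 0 := by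
  have hconv := convex_convexHull ℝ s
  obtain ⟨v, hv, hmin⟩ := exists_norm_eq_iInf_of_complete_convex hne.convexHull
    (hs.isCompact_convexHull ℝ).isComplete hconv u
  exact ⟨v, hv, (norm_eq_iInf_iff_real_inner_le_zero hconv hv).1 hmin⟩

theorem inner_le_of_mem_convexHull {s : Set E} {a x : E} {c : ℝ}
    (h : ∀ y ∈ s, inner ℝ a y ≤ c) (hx : x ∈ convexHull ℝ s) : inner ℝ a x ≤ c :=
  convexHull_min h (convex_halfSpace_le (innerₛₗ ℝ a).isLinear c) hx
end

namespace SimpleGame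

variable {N : Type*} [Fintype N]

noncomputable def incidence (C : Finset N) : EuclideanSpace ℝ N :=
  WithLp.toLp 2 ((C : Set N).indicator 1)

theorem inner_incidence (C : Finset N) (x : EuclideanSpace ℝ N) :
    inner ℝ (incidence C) x = ∑ i ∈ C, x i := by
  classical
  simp [incidence, PiLp.inner_apply, Set.indicator_apply, Finset.sum_ite_mem]

theorem inner_incidence_incidence [DecidableEq N] (A C : Finset N) :
    inner ℝ (incidence A) (incidence C) = #(A ∩ C) := by
  rw [inner_incidence]
  simp [incidence, Set.indicator_apply, Finset.sum_ite_mem]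

theorem sum_le_of_mem_convexHull_incidence [DecidableEq N] {𝒞 : Set (Finset N)}
    {x : EuclideanSpace ℝ N} (hx : x ∈ convexHull ℝ (incidence '' 𝒞)) {A : Finset N} {c : ℝ}
    (hA : ∀ C ∈ 𝒞, (#(A ∩ C) : ℝ) ≤ c) : ∑ i ∈ A, x i ≤ c := by
  rw [← inner_incidence]
  refine inner_le_of_mem_convexHull ?_ hx
  rintro _ ⟨C, hC, rfl⟩
  rw [inner_incidence_incidence]
  exact hA C hC

end SimpleGame

open SimpleGame in
theorem critical_threshold_le_card_div_four_general
    {N : Type*} [Fintype N] (v : Finset N → ℕ)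
    (hmono : ∀ C S : Finset N, C ⊆ S → v C ≤ v S)
    (hempty : v (∅ : Finset N) = 0) :
    ∃ p : N → ℝ,
      (∀ i, 0 ≤ p i) ∧
      (∀ C : Finset N, v C = 1 → 1 ≤ ∑ i ∈ C, p i) ∧
      (∀ C : Finset N, v C = 0 → ∑ i ∈ C, p i ≤ (Fintype.card N : ℝ) / 4) := by
  classical
  obtain ⟨ℓ, hℓ, hproj⟩ := exists_mem_convexHull_forall_inner_sub_nonpos
    (Set.toFinite (incidence '' {C | v C = 0})) ⟨_, ∅, hempty, rfl⟩ (incidence univ)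
  set p : EuclideanSpace ℝ N := incidence univ - ℓ
  have hp : ∀ i, p i = 1 - ℓ i := fun i => by simp [p, incidence]
  refine ⟨p, fun i => ?_, fun W hW => ?_, fun L hL => ?_⟩
  · have : ∑ j ∈ {i}, ℓ j ≤ 1 := sum_le_of_mem_convexHull_incidence hℓ fun C _ => by
      exact_mod_cast (card_le_card inter_subset_left).trans (card_singleton i).le
    simpa [hp] using this
  · have hinter : ∀ C ∈ {C | v C = 0}, (#(W ∩ C) : ℝ) ≤ #W - 1 := by
      intro C hC
      have hss : W ∩ C ⊂ W := inter_subset_left.ssubset_of_ne fun h => by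
        have := hmono W C (inter_eq_left.1 h)
        rw [hW, show v C = 0 from hC] at this
        omega
      have := card_lt_card hss
      rw [le_sub_iff_add_le]
      exact_mod_cast this
    have := sum_le_of_mem_convexHull_incidence hℓ hinter
    simp only [hp, sum_sub_distrib, sum_const, nsmul_eq_mul, mul_one]
    linarith
  · have hopt := hproj _ (subset_convexHull ℝ _ ⟨L, hL, rfl⟩)
    rw [inner_sub_right, sub_nonpos, real_inner_comm, inner_incidence] at hopt
    calc ∑ i ∈ L, p i ≤ inner ℝ p ℓ := hopt
      _ = ∑ i, ℓ i * (1 - ℓ i) := by simp [PiLp.inner_apply, hp]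
      _ ≤ ∑ _i : N, (1 / 4 : ℝ) := sum_le_sum fun i _ => by nlinarith [sq_nonneg (ℓ i - 1 / 2)]
      _ = (Fintype.card N : ℝ) / 4 := by simp [div_eq_mul_inv]

/-- **Conjecture of Freixas and Kurz (now a theorem).**
For a simple game `(N, v)` with `n` players, there exists a vector `p ∈ Q(𝒲)`
(i.e. `p ≥ 0` and `p(C) ≥ 1` for every winning coalition `C`) such that
`p(C) ≤ n / 4` for every losing coalition `C`; that is, the critical threshold
value `α = min_{p ∈ Q(𝒲)} max_{C ∈ 𝓛} p(C)` is at most `n / 4`. -/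
theorem critical_threshold_le_card_div_four
    {N : Type*} [Fintype N] (v : Finset N → ℕ)
    (hv01 : ∀ C, v C = 0 ∨ v C = 1)
    (hmono : ∀ C S : Finset N, C ⊆ S → v C ≤ v S)
    (hempty : v (∅ : Finset N) = 0)
    (hfull : v (Finset.univ : Finset N) = 1) :
    ∃ p : N → ℝ,
      (∀ i, 0 ≤ p i) ∧
      (∀ C : Finset N, v C = 1 → 1 ≤ ∑ i ∈ C, p i) ∧
      (∀ C : Finset N, v C = 0 → ∑ i ∈ C, p i ≤ (Fintype.card N : ℝ) / 4) :=
  critical_threshold_le_card_div_four_general v hmono hempty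
end

section
/- Let (N, v) be a simple game with n players and collection of winning coalitions 𝒲. Then there exists p ∈ Q(𝒲) such that for every q ∈ Q(𝒲) one has ⟨p, 𝟙 − q⟩ ≤ n/4, where 𝟙 ∈ ℝ^N is the all-ones vector and ⟨·,·⟩ is the standard inner product on ℝ^N. In other words, min_{p ∈ Q(𝒲)} max_{q ∈ Q(𝒲)} ⟨p, 𝟙 − q⟩ ≤ n/4. -/
/-!
Take for `p` the point of minimal Euclidean norm of the closed convex set `Q(𝒲)`. The
variational inequality for this projection of `0` gives `⟪p, p⟫ ≤ ⟪p, q⟫` for all `q ∈ Q(𝒲)`,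
hence `⟪p, 𝟙 - q⟫ ≤ ⟪p, 𝟙 - p⟫ = ∑ pᵢ (1 - pᵢ) ≤ n / 4`.
-/

open scoped InnerProductSpace

theorem exists_mem_forall_inner_self_le_inner {E : Type*} [NormedAddCommGroup E]
    [InnerProductSpace ℝ E] {K : Set E} (hne : K.Nonempty) (hcomplete : IsComplete K)
    (hconv : Convex ℝ K) : ∃ p ∈ K, ∀ q ∈ K, ⟪p, p⟫_ℝ ≤ ⟪p, q⟫_ℝ := by
  obtain ⟨p, hpK, hpmin⟩ := exists_norm_eq_iInf_of_complete_convex hne hcomplete hconv 0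
  refine ⟨p, hpK, fun q hq => ?_⟩
  have h := (norm_eq_iInf_iff_real_inner_le_zero hconv hpK).mp hpmin q hq
  rw [zero_sub, inner_neg_left, inner_sub_right] at h
  linarith

theorem mul_one_sub_le_one_div_four (x : ℝ) : x * (1 - x) ≤ 1 / 4 := by
  nlinarith [sq_nonneg (x - 1 / 2)]

theorem sum_mul_one_sub_le_card_div_four {N : Type*} [Fintype N] (p : N → ℝ) :
    ∑ i, p i * (1 - p i) ≤ (Fintype.card N : ℝ) / 4 := by
  calc ∑ i, p i * (1 - p i) ≤ ∑ _i : N, (1 : ℝ) / 4 :=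
        Finset.sum_le_sum fun i _ => mul_one_sub_le_one_div_four (p i)
    _ = (Fintype.card N : ℝ) / 4 := by
      rw [Finset.sum_const, Finset.card_univ, nsmul_eq_mul]
      ring

namespace SimpleGame

variable {N : Type*}

/-- `Q(𝒲)` for `W = 𝒲`. -/
def blockingPolyhedron (W : Set (Finset N)) : Set (EuclideanSpace ℝ N) :=
  {x | (∀ i, 0 ≤ x i) ∧ ∀ C ∈ W, 1 ≤ ∑ i ∈ C, x i}

theorem convex_blockingPolyhedron (W : Set (Finset N)) : Convex ℝ (blockingPolyhedron W) := by
  intro x hx y hy a b ha hb hab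
  refine ⟨fun i => ?_, fun C hC => ?_⟩
  · simp only [PiLp.add_apply, PiLp.smul_apply, smul_eq_mul]
    exact add_nonneg (mul_nonneg ha (hx.1 i)) (mul_nonneg hb (hy.1 i))
  · simp only [PiLp.add_apply, PiLp.smul_apply, smul_eq_mul, Finset.sum_add_distrib,
      ← Finset.mul_sum]
    nlinarith [hx.2 C hC, hy.2 C hC]

theorem isClosed_blockingPolyhedron (W : Set (Finset N)) :
    IsClosed (blockingPolyhedron W) := by
  simp only [blockingPolyhedron, Set.ofPred_and, Set.ofPred_forall]
  exact (isClosed_iInter fun i => isClosed_le continuous_const (by fun_prop)).inter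
    (isClosed_iInter fun C => isClosed_iInter fun _ => isClosed_le continuous_const (by fun_prop))

theorem blockingPolyhedron_nonempty {W : Set (Finset N)} (hW : ∅ ∉ W) :
    (blockingPolyhedron W).Nonempty := by
  refine ⟨WithLp.toLp 2 fun _ => 1, fun _ => zero_le_one, fun C hC => ?_⟩
  have hC : C.Nonempty := Finset.nonempty_iff_ne_empty.mpr fun h => hW (h ▸ hC)
  simpa using hC.card_pos

end SimpleGame

open SimpleGame in
theorem min_max_inner_one_sub_le_card_div_four_general
    {N : Type*} [Fintype N] (v : Finset N → ℕ)
    (hempty : v (∅ : Finset N) = 0) :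
    ∃ p : N → ℝ,
      ((∀ i, 0 ≤ p i) ∧ (∀ C : Finset N, v C = 1 → 1 ≤ ∑ i ∈ C, p i)) ∧
      ∀ q : N → ℝ,
        ((∀ i, 0 ≤ q i) ∧ (∀ C : Finset N, v C = 1 → 1 ≤ ∑ i ∈ C, q i)) →
        ∑ i, p i * (1 - q i) ≤ (Fintype.card N : ℝ) / 4 := by
  set W : Set (Finset N) := {C | v C = 1}
  have hW : ∅ ∉ W := by simp [W, hempty]
  obtain ⟨p, hpQ, hpmin⟩ := exists_mem_forall_inner_self_le_inner (blockingPolyhedron_nonempty hW)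
    (isClosed_blockingPolyhedron W).isComplete (convex_blockingPolyhedron W)
  refine ⟨p, hpQ, fun q hq => ?_⟩
  have hpq : ∑ i, p i * p i ≤ ∑ i, p i * q i := by
    simpa only [PiLp.inner_apply, RCLike.inner_apply, conj_trivial, mul_comm]
      using hpmin (WithLp.toLp 2 q) hq
  calc ∑ i, p i * (1 - q i) ≤ ∑ i, p i * (1 - p i) := by
        simp only [mul_one_sub, Finset.sum_sub_distrib]
        linarith
    _ ≤ (Fintype.card N : ℝ) / 4 := sum_mul_one_sub_le_card_div_four p

/-- **Reformulation of the conjecture of Freixas and Kurz.**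
For a simple game `(N, v)` with `n` players and collection of winning coalitions `𝒲`,
there exists `p ∈ Q(𝒲)` such that for every `q ∈ Q(𝒲)` one has
`⟨p, 𝟙 - q⟩ ≤ n / 4`; that is,
`min_{p ∈ Q(𝒲)} max_{q ∈ Q(𝒲)} ⟨p, 𝟙 - q⟩ ≤ n / 4`. -/
theorem min_max_inner_one_sub_le_card_div_four
    {N : Type*} [Fintype N] (v : Finset N → ℕ)
    (hv01 : ∀ C, v C = 0 ∨ v C = 1)
    (hmono : ∀ C S : Finset N, C ⊆ S → v C ≤ v S)
    (hempty : v (∅ : Finset N) = 0)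
    (hfull : v (Finset.univ : Finset N) = 1) :
    ∃ p : N → ℝ,
      ((∀ i, 0 ≤ p i) ∧ (∀ C : Finset N, v C = 1 → 1 ≤ ∑ i ∈ C, p i)) ∧
      ∀ q : N → ℝ,
        ((∀ i, 0 ≤ q i) ∧ (∀ C : Finset N, v C = 1 → 1 ≤ ∑ i ∈ C, q i)) →
        ∑ i, p i * (1 - q i) ≤ (Fintype.card N : ℝ) / 4 :=
  min_max_inner_one_sub_le_card_div_four_general v hempty
end

section
/- Let (N, v) be a simple game with n players and collection of winning coalitions 𝒲, and let p⋆ ∈ Q(𝒲) be a point of minimum Euclidean norm in Q(𝒲), i.e., ‖p⋆‖₂ ≤ ‖p‖₂ for all p ∈ Q(𝒲). Then for every q ∈ Q(𝒲) one has ⟨p⋆, 𝟙 − q⟩ ≤ n/4, where 𝟙 ∈ ℝ^N is the all-ones vector. -/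
/-- **Strengthening of the conjecture of Freixas and Kurz.**
For a simple game `(N, v)` with `n` players, if `p⋆ ∈ Q(𝒲)` is a point of minimum
Euclidean norm in `Q(𝒲)` (i.e. `‖p⋆‖₂ ≤ ‖p‖₂`, equivalently
`∑ i, p⋆ i ^ 2 ≤ ∑ i, p i ^ 2`, for all `p ∈ Q(𝒲)`), then for every `q ∈ Q(𝒲)`
one has `⟨p⋆, 𝟙 - q⟩ ≤ n / 4`. -/
theorem min_norm_point_inner_one_sub_le_card_div_four
    {N : Type*} [Fintype N] (v : Finset N → ℕ)
    (hv01 : ∀ C, v C = 0 ∨ v C = 1)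
    (hmono : ∀ C S : Finset N, C ⊆ S → v C ≤ v S)
    (hempty : v (∅ : Finset N) = 0)
    (hfull : v (Finset.univ : Finset N) = 1)
    (pstar : N → ℝ)
    (hpstarQ : (∀ i, 0 ≤ pstar i) ∧
      (∀ C : Finset N, v C = 1 → 1 ≤ ∑ i ∈ C, pstar i))
    (hmin : ∀ p : N → ℝ,
      ((∀ i, 0 ≤ p i) ∧ (∀ C : Finset N, v C = 1 → 1 ≤ ∑ i ∈ C, p i)) →
      ∑ i, pstar i ^ 2 ≤ ∑ i, p i ^ 2) :
    ∀ q : N → ℝ,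
      ((∀ i, 0 ≤ q i) ∧ (∀ C : Finset N, v C = 1 → 1 ≤ ∑ i ∈ C, q i)) →
      ∑ i, pstar i * (1 - q i) ≤ (Fintype.card N : ℝ) / 4 := by
  intro q hq
  obtain ⟨hp0, hpW⟩ := hpstarQ
  obtain ⟨hq0, hqW⟩ := hq
  set d : N → ℝ := fun i => q i - pstar i with hd
  set S : ℝ := ∑ i, pstar i * d i with hS
  set D : ℝ := ∑ i, d i ^ 2 with hD
  have hD0 : 0 ≤ D := Finset.sum_nonneg fun i _ => sq_nonneg _
  -- variational inequality: for t ∈ (0,1], 0 ≤ 2S + tD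
  have key : ∀ t : ℝ, 0 < t → t ≤ 1 → 0 ≤ 2 * S + t * D := by
    intro t ht0 ht1
    have hmem : (∀ i, 0 ≤ pstar i + t * d i) ∧
        (∀ C : Finset N, v C = 1 → 1 ≤ ∑ i ∈ C, (pstar i + t * d i)) := by
      constructor
      · intro i
        have : pstar i + t * d i = (1 - t) * pstar i + t * q i := by ring
        rw [this]
        have h1 : 0 ≤ (1 - t) * pstar i :=
          mul_nonneg (by linarith) (hp0 i)
        have h2 : 0 ≤ t * q i := mul_nonneg ht0.le (hq0 i)
        linarith
      · intro C hC
        have : ∑ i ∈ C, (pstar i + t * d i)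
            = (1 - t) * (∑ i ∈ C, pstar i) + t * (∑ i ∈ C, q i) := by
          rw [Finset.mul_sum, Finset.mul_sum, ← Finset.sum_add_distrib]
          exact Finset.sum_congr rfl fun i _ => by simp [hd]; ring
        rw [this]
        have h1 := hpW C hC
        have h2 := hqW C hC
        nlinarith
    have h := hmin _ hmem
    have hexp : ∑ i, (pstar i + t * d i) ^ 2
        = (∑ i, pstar i ^ 2) + t * (2 * S + t * D) := by
      simp only [hS, hD, Finset.mul_sum, ← Finset.sum_add_distrib]
      exact Finset.sum_congr rfl fun i _ => by ring
    rw [hexp] at h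
    nlinarith
  have hS0 : 0 ≤ S := by
    by_contra hneg
    push_neg at hneg
    rcases eq_or_lt_of_le hD0 with hDeq | hDpos
    · have := key 1 one_pos le_rfl
      nlinarith
    · set t : ℝ := min 1 (-S / D) with htdef
      have ht0 : 0 < t := lt_min one_pos (div_pos (by linarith) hDpos)
      have ht1 : t ≤ 1 := min_le_left _ _
      have htD : t * D ≤ -S := by
        have : t ≤ -S / D := min_le_right _ _
        calc t * D ≤ (-S / D) * D := by nlinarith
          _ = -S := by field_simp
      have := key t ht0 ht1
      linarith
  -- now ∑ p⋆(1-q) = ∑ p⋆(1-p⋆) - S ≤ ∑ p⋆(1-p⋆) ≤ n/4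
  have hsplit : ∑ i, pstar i * (1 - q i)
      = (∑ i, pstar i * (1 - pstar i)) - S := by
    simp only [hS, ← Finset.sum_sub_distrib]
    exact Finset.sum_congr rfl fun i _ => by simp [hd]; ring
  rw [hsplit]
  have hbound : ∑ i, pstar i * (1 - pstar i) ≤ (Fintype.card N : ℝ) / 4 := by
    calc ∑ i, pstar i * (1 - pstar i) ≤ ∑ _i : N, (1/4 : ℝ) :=
          Finset.sum_le_sum fun i _ => by nlinarith [sq_nonneg (pstar i - 1/2)]
      _ = (Fintype.card N : ℝ) / 4 := by
          simp [Finset.sum_const, Finset.card_univ]; ring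
  linarith
end

section
/- Let (N, v) be a simple game with collection of winning coalitions 𝒲 and collection of losing coalitions 𝓛. Then for every p ∈ Q(𝒲) with p ≥ 0, one has max_{C ∈ 𝓛} p(C) = max { ⟨p, 𝟙 − q⟩ : q ∈ Q(𝒲), q ∈ {0,1}^N }. Consequently, the critical threshold value satisfies α = min_{p ∈ Q(𝒲)} max_{C ∈ 𝓛} p(C) = min_{p ∈ Q(𝒲)} max { ⟨p, 𝟙 − q⟩ : q ∈ Q(𝒲) ∩ {0,1}^N }. -/
/-- For a simple game `(N, v)` and every `p ∈ Q(𝒲)` (so in particular `p ≥ 0`),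
`max_{C ∈ 𝓛} p(C) = max { ⟨p, 𝟙 - q⟩ : q ∈ Q(𝒲), q ∈ {0,1}^N }`.
Consequently the critical threshold value satisfies
`α = min_{p ∈ Q(𝒲)} max_{C ∈ 𝓛} p(C)
   = min_{p ∈ Q(𝒲)} max { ⟨p, 𝟙 - q⟩ : q ∈ Q(𝒲) ∩ {0,1}^N }`. -/
theorem max_losing_eq_max_inner_one_sub_zero_one
    {N : Type*} [Fintype N] (v : Finset N → ℕ)
    (hv01 : ∀ C, v C = 0 ∨ v C = 1)
    (hmono : ∀ C S : Finset N, C ⊆ S → v C ≤ v S)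
    (hempty : v (∅ : Finset N) = 0)
    (hfull : v (Finset.univ : Finset N) = 1) :
    (∀ p : N → ℝ,
      ((∀ i, 0 ≤ p i) ∧ (∀ C : Finset N, v C = 1 → 1 ≤ ∑ i ∈ C, p i)) →
      sSup {x : ℝ | ∃ C : Finset N, v C = 0 ∧ x = ∑ i ∈ C, p i}
        = sSup {x : ℝ | ∃ q : N → ℝ,
            ((∀ i, 0 ≤ q i) ∧ (∀ C : Finset N, v C = 1 → 1 ≤ ∑ i ∈ C, q i)) ∧
            (∀ i, q i = 0 ∨ q i = 1) ∧ x = ∑ i, p i * (1 - q i)}) ∧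
    sInf {a : ℝ | ∃ p : N → ℝ,
        ((∀ i, 0 ≤ p i) ∧ (∀ C : Finset N, v C = 1 → 1 ≤ ∑ i ∈ C, p i)) ∧
        a = sSup {x : ℝ | ∃ C : Finset N, v C = 0 ∧ x = ∑ i ∈ C, p i}}
      = sInf {a : ℝ | ∃ p : N → ℝ,
        ((∀ i, 0 ≤ p i) ∧ (∀ C : Finset N, v C = 1 → 1 ≤ ∑ i ∈ C, p i)) ∧
        a = sSup {x : ℝ | ∃ q : N → ℝ,
            ((∀ i, 0 ≤ q i) ∧ (∀ C : Finset N, v C = 1 → 1 ≤ ∑ i ∈ C, q i)) ∧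
            (∀ i, q i = 0 ∨ q i = 1) ∧ x = ∑ i, p i * (1 - q i)}} := by
  classical
  have key : ∀ p : N → ℝ,
      {x : ℝ | ∃ C : Finset N, v C = 0 ∧ x = ∑ i ∈ C, p i}
        = {x : ℝ | ∃ q : N → ℝ,
            ((∀ i, 0 ≤ q i) ∧ (∀ C : Finset N, v C = 1 → 1 ≤ ∑ i ∈ C, q i)) ∧
            (∀ i, q i = 0 ∨ q i = 1) ∧ x = ∑ i, p i * (1 - q i)} := by
    intro p
    ext x
    constructor
    · rintro ⟨C, hC, rfl⟩
      refine ⟨fun i => if i ∈ C then 0 else 1, ⟨fun i => by positivity, ?_⟩,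
        fun i => by by_cases h : i ∈ C <;> simp [h], ?_⟩
      · intro S hS
        -- S is winning, so S ⊄ C; pick j ∈ S \ C
        have hSC : ¬ S ⊆ C := fun h => by
          have := hmono S C h
          omega
        obtain ⟨j, hjS, hjC⟩ := Finset.not_subset.mp hSC
        calc (1 : ℝ) = ∑ i ∈ {j}, (if i ∈ C then (0:ℝ) else 1) := by simp [hjC]
          _ ≤ ∑ i ∈ S, (if i ∈ C then (0:ℝ) else 1) := by
              apply Finset.sum_le_sum_of_subset_of_nonneg
              · simpa using hjS
              · intro i _ _; positivity
      · rw [← Finset.sum_filter_add_sum_filter_not Finset.univ (· ∈ C)]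
        have h1 : ∑ i ∈ Finset.univ.filter (· ∈ C), p i * (1 - if i ∈ C then (0:ℝ) else 1)
            = ∑ i ∈ Finset.univ.filter (· ∈ C), p i := by
          apply Finset.sum_congr rfl
          intro i hi
          simp only [Finset.mem_filter] at hi
          simp [hi.2]
        have h2 : ∑ i ∈ Finset.univ.filter (¬ · ∈ C), p i * (1 - if i ∈ C then (0:ℝ) else 1)
            = 0 := by
          apply Finset.sum_eq_zero
          intro i hi
          simp only [Finset.mem_filter] at hi
          simp [hi.2]
        rw [h1, h2, add_zero]
        congr 1
        ext i
        simp
    · rintro ⟨q, ⟨hq0, hqW⟩, hq01, rfl⟩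
      refine ⟨Finset.univ.filter (fun i => q i = 0), ?_, ?_⟩
      · rcases hv01 (Finset.univ.filter (fun i => q i = 0)) with h | h
        · exact h
        · exfalso
          have h1 := hqW _ h
          have h2 : ∑ i ∈ Finset.univ.filter (fun i => q i = 0), q i = 0 :=
            Finset.sum_eq_zero fun i hi => (Finset.mem_filter.mp hi).2
          rw [h2] at h1; linarith
      · rw [Finset.sum_filter]
        apply Finset.sum_congr rfl
        intro i _
        rcases hq01 i with h | h <;> simp [h]
  constructor
  · intro p _
    rw [key p]
  · congr 1
    ext a
    constructor
    · rintro ⟨p, hp, rfl⟩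
      exact ⟨p, hp, by rw [key p]⟩
    · rintro ⟨p, hp, rfl⟩
      exact ⟨p, hp, by rw [key p]⟩
end

section
/- Let (N, v) be a simple game with n players, collection of winning coalitions 𝒲 and collection of losing coalitions 𝓛. Suppose (2/n)𝟙 lies in the convex hull of the characteristic vectors of the winning coalitions and (1/2)𝟙 lies in the convex hull of the characteristic vectors of the losing coalitions. Then for every p ∈ Q(𝒲) there exists a losing coalition C with p(C) ≥ n/4; consequently the critical threshold value α = min_{p ∈ Q(𝒲)} max_{C ∈ 𝓛} p(C) equals n/4. -/
/-!
Both hull conditions are used only through linear functionals: if the `q`-weight of every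
coalition of a family lies in a convex set `T`, then so does `∑ i, y i * q i` for every `y` in
the convex hull of their characteristic vectors. Testing `(2/n)𝟙` against `p ∈ Q(𝒲)` gives
`p(N) ≥ n/2`, and testing `(1/2)𝟙` against `p` yields a losing coalition carrying half of
`p(N)`. For the matching upper bound take `p = (1/2)𝟙`: every player lies in a losing
coalition, so winning coalitions have at least two players; and the indicator of the complement
of a losing coalition lies in `Q(𝒲)`, so losing coalitions have at most `n/2` players.
-/

namespace SimpleGame

variable {N : Type*} [Fintype N] [DecidableEq N]

def charVecs (P : Finset N → Prop) : Set (N → ℝ) :=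
  {x | ∃ C : Finset N, P C ∧ x = fun i => if i ∈ C then 1 else 0}

theorem sum_mul_mem_of_mem_convexHull {P : Finset N → Prop} {y : N → ℝ}
    (hy : y ∈ convexHull ℝ (charVecs P)) (q : N → ℝ) {T : Set ℝ} (hT : Convex ℝ T)
    (hq : ∀ C, P C → ∑ i ∈ C, q i ∈ T) : ∑ i, y i * q i ∈ T := by
  refine convexHull_min ?_ (hT.linear_preimage (Fintype.linearCombination ℝ q)) hy
  rintro _ ⟨C, hC, rfl⟩
  simpa [Fintype.linearCombination_apply, Finset.sum_ite_mem] using hq C hC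

theorem mul_sum_mem_of_const_mem_convexHull {P : Finset N → Prop} {c : ℝ}
    (hc : (fun _ => c) ∈ convexHull ℝ (charVecs P)) (q : N → ℝ) {T : Set ℝ}
    (hT : Convex ℝ T) (hq : ∀ C, P C → ∑ i ∈ C, q i ∈ T) : c * ∑ i, q i ∈ T := by
  simpa only [Finset.mul_sum] using sum_mul_mem_of_mem_convexHull hc q hT hq

theorem exists_mem_of_mem_convexHull {P : Finset N → Prop} {y : N → ℝ}
    (hy : y ∈ convexHull ℝ (charVecs P)) {i : N} (hi : y i ≠ 0) : ∃ C, P C ∧ i ∈ C := by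
  by_contra! h
  have := sum_mul_mem_of_mem_convexHull hy (Pi.single i 1) (convex_singleton 0)
    fun C hC => by simp [Finset.sum_pi_single', h C hC]
  simp [Pi.single_apply, hi] at this

theorem card_div_two_le_sum {P : Finset N → Prop}
    (hP : (fun _ => 2 / (Fintype.card N : ℝ)) ∈ convexHull ℝ (charVecs P)) {p : N → ℝ}
    (hp : ∀ C, P C → 1 ≤ ∑ i ∈ C, p i) : (Fintype.card N : ℝ) / 2 ≤ ∑ i, p i := by
  have h := mul_sum_mem_of_const_mem_convexHull hP p (convex_Ici 1) hp
  have hn : (0 : ℝ) < Fintype.card N :=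
    (Nat.cast_nonneg _).lt_of_ne' fun hn => by norm_num [hn] at h
  rw [Set.mem_Ici, div_mul_eq_mul_div, one_le_div hn] at h
  linarith

theorem exists_le_sum_of_half_mem_convexHull {P : Finset N → Prop}
    (hP : (fun _ => (1 : ℝ) / 2) ∈ convexHull ℝ (charVecs P)) (p : N → ℝ) :
    ∃ C, P C ∧ (∑ i, p i) / 2 ≤ ∑ i ∈ C, p i := by
  by_contra! h
  have := mul_sum_mem_of_const_mem_convexHull hP p (convex_Iio _) h
  simp only [Set.mem_Iio] at this
  linarith

variable {v : Finset N → ℕ}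

theorem two_le_card_of_winning (hmono : ∀ C S : Finset N, C ⊆ S → v C ≤ v S)
    (hempty : v ∅ = 0)
    (hlose : (fun _ => (1 : ℝ) / 2) ∈ convexHull ℝ (charVecs fun C => v C = 0))
    {C : Finset N} (hC : v C = 1) : 2 ≤ C.card := by
  by_contra! h
  interval_cases hcard : C.card
  · simp_all
  · obtain ⟨i, rfl⟩ := Finset.card_eq_one.mp hcard
    obtain ⟨L, hL, hiL⟩ := exists_mem_of_mem_convexHull hlose (i := i) (by norm_num)
    have := hmono _ _ (Finset.singleton_subset_iff.mpr hiL)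
    omega

theorem card_le_half_of_losing (hmono : ∀ C S : Finset N, C ⊆ S → v C ≤ v S)
    (hwin : (fun _ => 2 / (Fintype.card N : ℝ)) ∈ convexHull ℝ (charVecs fun C => v C = 1))
    {C : Finset N} (hC : v C = 0) : (C.card : ℝ) ≤ Fintype.card N / 2 := by
  have hblock : ∀ W, v W = 1 → 1 ≤ ∑ i ∈ W, if i ∈ Cᶜ then (1 : ℝ) else 0 := by
    intro W hW
    have hWC : ¬W ⊆ C := fun hWC => by have := hmono _ _ hWC; omega
    obtain ⟨i, hiW, hiC⟩ := Finset.not_subset.mp hWC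
    rw [Finset.sum_ite_mem, Finset.sum_const, nsmul_one, Nat.one_le_cast]
    exact Finset.card_pos.mpr ⟨i, Finset.mem_inter.mpr ⟨hiW, Finset.mem_compl.mpr hiC⟩⟩
  have := card_div_two_le_sum hwin hblock
  rw [Finset.sum_ite_mem, Finset.univ_inter, Finset.sum_const, nsmul_one] at this
  have hcompl : (C.card : ℝ) + Cᶜ.card = Fintype.card N := by
    exact_mod_cast Finset.card_add_card_compl C
  linarith

end SimpleGame

theorem critical_threshold_eq_of_convex_hull_conditions_general
    {N : Type*} [Fintype N] [DecidableEq N] (v : Finset N → ℕ)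
    (hmono : ∀ C S : Finset N, C ⊆ S → v C ≤ v S)
    (hempty : v (∅ : Finset N) = 0)
    (hwin : (fun _ : N => 2 / (Fintype.card N : ℝ)) ∈
      convexHull ℝ {x : N → ℝ | ∃ C : Finset N, v C = 1 ∧
        x = fun i => if i ∈ C then 1 else 0})
    (hlose : (fun _ : N => (1 : ℝ) / 2) ∈
      convexHull ℝ {x : N → ℝ | ∃ C : Finset N, v C = 0 ∧
        x = fun i => if i ∈ C then 1 else 0}) :
    (∀ p : N → ℝ,
      ((∀ i, 0 ≤ p i) ∧ (∀ C : Finset N, v C = 1 → 1 ≤ ∑ i ∈ C, p i)) →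
      ∃ C : Finset N, v C = 0 ∧ (Fintype.card N : ℝ) / 4 ≤ ∑ i ∈ C, p i) ∧
    (∃ p : N → ℝ,
      ((∀ i, 0 ≤ p i) ∧ (∀ C : Finset N, v C = 1 → 1 ≤ ∑ i ∈ C, p i)) ∧
      ∀ C : Finset N, v C = 0 → ∑ i ∈ C, p i ≤ (Fintype.card N : ℝ) / 4) := by
  constructor
  · rintro p ⟨-, hp⟩
    have hmass := SimpleGame.card_div_two_le_sum hwin hp
    obtain ⟨C, hC, hpC⟩ := SimpleGame.exists_le_sum_of_half_mem_convexHull hlose p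
    exact ⟨C, hC, by linarith⟩
  · refine ⟨fun _ => 1 / 2, ⟨fun _ => by norm_num, fun C hC => ?_⟩, fun C hC => ?_⟩
    · have hcard : (2 : ℝ) ≤ C.card :=
        mod_cast SimpleGame.two_le_card_of_winning hmono hempty hlose hC
      rw [Finset.sum_const, nsmul_eq_mul]
      linarith
    · have hcard := SimpleGame.card_le_half_of_losing hmono hwin hC
      rw [Finset.sum_const, nsmul_eq_mul]
      linarith

/-- For a simple game `(N, v)` with `n` players: if `(2/n)𝟙` lies in the convex
hull of the characteristic vectors of the winning coalitions and `(1/2)𝟙` lies in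
the convex hull of the characteristic vectors of the losing coalitions, then for
every `p ∈ Q(𝒲)` there is a losing coalition `C` with `p(C) ≥ n / 4`;
consequently the critical threshold value `α = min_{p ∈ Q(𝒲)} max_{C ∈ 𝓛} p(C)`
equals `n / 4`. -/
theorem critical_threshold_eq_of_convex_hull_conditions
    {N : Type*} [Fintype N] [DecidableEq N] (v : Finset N → ℕ)
    (hv01 : ∀ C, v C = 0 ∨ v C = 1)
    (hmono : ∀ C S : Finset N, C ⊆ S → v C ≤ v S)
    (hempty : v (∅ : Finset N) = 0)
    (hfull : v (Finset.univ : Finset N) = 1)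
    (hwin : (fun _ : N => 2 / (Fintype.card N : ℝ)) ∈
      convexHull ℝ {x : N → ℝ | ∃ C : Finset N, v C = 1 ∧
        x = fun i => if i ∈ C then 1 else 0})
    (hlose : (fun _ : N => (1 : ℝ) / 2) ∈
      convexHull ℝ {x : N → ℝ | ∃ C : Finset N, v C = 0 ∧
        x = fun i => if i ∈ C then 1 else 0}) :
    (∀ p : N → ℝ,
      ((∀ i, 0 ≤ p i) ∧ (∀ C : Finset N, v C = 1 → 1 ≤ ∑ i ∈ C, p i)) →
      ∃ C : Finset N, v C = 0 ∧ (Fintype.card N : ℝ) / 4 ≤ ∑ i ∈ C, p i) ∧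
    (∃ p : N → ℝ,
      ((∀ i, 0 ≤ p i) ∧ (∀ C : Finset N, v C = 1 → 1 ≤ ∑ i ∈ C, p i)) ∧
      ∀ C : Finset N, v C = 0 → ∑ i ∈ C, p i ≤ (Fintype.card N : ℝ) / 4) :=
  critical_threshold_eq_of_convex_hull_conditions_general v hmono hempty hwin hlose
end

section
/- Let (N, v) be a simple game with n players, collection of winning coalitions 𝒲 and collection of losing coalitions 𝓛. Suppose that for every p ∈ Q(𝒲) there exists a losing coalition C with p(C) ≥ n/4 (i.e., the critical threshold value α equals n/4). Then (2/n)𝟙 lies in the convex hull of the characteristic vectors of the winning coalitions and (1/2)𝟙 lies in the convex hull of the characteristic vectors of the losing coalitions. -/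
/-!
Let `K` and `W` be the convex hulls of the characteristic vectors of the losing and of the
winning coalitions, and `c = n / 4`. The threshold hypothesis says that no nonnegative `p` is
negative on the compact convex set `K - c • W`, so by Hahn–Banach this set meets the nonnegative
orthant: there are `t ∈ K`, `w ∈ W` with `c • w ≤ t`. A winning coalition is never contained
in a losing one, so `1 ≤ w ⬝ᵥ (1 - x)` for all `x ∈ K`; at `x = t` this gives
`c ≤ (c • w) ⬝ᵥ (1 - t) ≤ t ⬝ᵥ (1 - t) = c - ∑ (tᵢ - 1/2)²`. Hence `t = 1/2`, and equality in the
middle step forces `c • w = t`.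
-/

open Finset
open scoped Pointwise

section

variable {ι : Type*} [Fintype ι]

theorem exists_nonneg_mem_of_forall_exists_dotProduct_nonneg {D : Set (ι → ℝ)}
    (hconv : Convex ℝ D) (hcomp : IsCompact D)
    (h : ∀ p : ι → ℝ, 0 ≤ p → ∃ d ∈ D, 0 ≤ p ⬝ᵥ d) : ∃ d ∈ D, 0 ≤ d := by
  classical
  by_contra! hD
  have hdisj : Disjoint D (Set.Ici 0) :=
    Set.disjoint_left.mpr fun d hd hd0 => hD d hd hd0
  obtain ⟨f, u, w, hfD, huw, hfpos⟩ :=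
    geometric_hahn_banach_compact_closed hconv hcomp (convex_Ici 0) isClosed_Ici hdisj
  set p : ι → ℝ := fun i => f (Pi.single i 1)
  have hfp : ∀ x, f x = p ⬝ᵥ x := fun x => by
    conv_lhs => rw [pi_eq_sum_univ' x]
    simp [map_sum, dotProduct, p, mul_comm]
  have hw : w < 0 := by simpa using hfpos 0 Set.self_mem_Ici
  have hp : 0 ≤ p := fun i => by
    by_contra! hpi
    have := hfpos ((w / p i) • Pi.single i 1) <| Set.mem_Ici.mpr <|
      smul_nonneg (div_nonneg_of_nonpos hw.le hpi.le) (Pi.single_nonneg.mpr zero_le_one)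
    simp only [map_smul, smul_eq_mul] at this
    rw [div_mul_cancel₀ _ hpi.ne] at this
    exact this.false
  obtain ⟨d, hd, hpd⟩ := h p hp
  linarith [hfD d hd, hfp d]

variable {s : Set (ι → ℝ)} {a x : ι → ℝ} {r : ℝ}

lemma isLinearMap_dotProduct (a : ι → ℝ) : IsLinearMap ℝ (a ⬝ᵥ ·) :=
  ⟨dotProduct_add a, fun c x => dotProduct_smul c a x⟩

lemma le_dotProduct_of_mem_convexHull (h : ∀ y ∈ s, r ≤ a ⬝ᵥ y) (hx : x ∈ convexHull ℝ s) :
    r ≤ a ⬝ᵥ x :=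
  convexHull_min h (convex_halfSpace_ge (isLinearMap_dotProduct a) r) hx

lemma dotProduct_le_of_mem_convexHull (h : ∀ y ∈ s, a ⬝ᵥ y ≤ r) (hx : x ∈ convexHull ℝ s) :
    a ⬝ᵥ x ≤ r :=
  convexHull_min h (convex_halfSpace_le (isLinearMap_dotProduct a) r) hx

lemma sum_sub_half_sq (t : ι → ℝ) :
    ∑ i, (t i - 1 / 2) ^ 2 = (Fintype.card ι : ℝ) / 4 - t ⬝ᵥ (1 - t) := by
  have hi : ∀ i, (t i - 1 / 2) ^ 2 = 1 / 4 - t i * (1 - t i) := fun i => by ring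
  simp only [hi, sum_sub_distrib, sum_const, card_univ, nsmul_eq_mul, dotProduct,
    Pi.sub_apply, Pi.one_apply]
  ring

lemma dotProduct_one_sub_le (t : ι → ℝ) : t ⬝ᵥ (1 - t) ≤ (Fintype.card ι : ℝ) / 4 := by
  linarith [sum_sub_half_sq t, sum_nonneg fun i (_ : i ∈ univ) => sq_nonneg (t i - 1 / 2)]

lemma eq_half_of_card_div_four_le_dotProduct_one_sub {t : ι → ℝ}
    (h : (Fintype.card ι : ℝ) / 4 ≤ t ⬝ᵥ (1 - t)) : t = fun _ => 1 / 2 := by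
  have hsq := sum_sub_half_sq t
  have hle : ∑ i, (t i - 1 / 2) ^ 2 ≤ 0 := by linarith
  have hzero := (sum_eq_zero_iff_of_nonneg fun i _ => sq_nonneg (t i - 1 / 2)).mp
    (hle.antisymm (sum_nonneg fun i _ => sq_nonneg _))
  funext i
  exact sub_eq_zero.mp (pow_eq_zero_iff two_ne_zero |>.mp (hzero i (mem_univ i)))

end

namespace SimpleGame

lemma exists_losing_card_div_four_mul_le {N : Type*} [Fintype N] {v : Finset N → ℕ}
    (hempty : v ∅ = 0)
    (halpha : ∀ p : N → ℝ,
      ((∀ i, 0 ≤ p i) ∧ (∀ C : Finset N, v C = 1 → 1 ≤ ∑ i ∈ C, p i)) →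
      ∃ C : Finset N, v C = 0 ∧ (Fintype.card N : ℝ) / 4 ≤ ∑ i ∈ C, p i)
    {p : N → ℝ} (hp : 0 ≤ p) {W : Finset N}
    (hW : ∀ C, v C = 1 → ∑ i ∈ W, p i ≤ ∑ i ∈ C, p i) :
    ∃ C, v C = 0 ∧ (Fintype.card N : ℝ) / 4 * ∑ i ∈ W, p i ≤ ∑ i ∈ C, p i := by
  set m := ∑ i ∈ W, p i
  rcases (sum_nonneg fun i _ => hp i : 0 ≤ m).eq_or_lt with hm | hm
  · exact ⟨∅, hempty, by simp [m, ← hm]⟩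
  have hscaled : ∀ C, ∑ i ∈ C, (m⁻¹ • p) i = m⁻¹ * ∑ i ∈ C, p i := fun C => by
    simp [mul_sum]
  obtain ⟨C, hC, hle⟩ := halpha (m⁻¹ • p)
    ⟨fun i => smul_nonneg (inv_nonneg.mpr hm.le) (hp i), fun C hC => by
      rw [hscaled, ← div_eq_inv_mul, one_le_div hm]
      exact hW C hC⟩
  rw [hscaled, ← div_eq_inv_mul, le_div_iff₀ hm] at hle
  exact ⟨C, hC, hle⟩

variable {N : Type*} [DecidableEq N]

def charVec (C : Finset N) : N → ℝ := fun i => if i ∈ C then 1 else 0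

variable [Fintype N]

def charVecsOfValue (v : Finset N → ℕ) (b : ℕ) : Set (N → ℝ) :=
  {x | ∃ C, v C = b ∧ x = charVec C}

lemma dotProduct_charVec (p : N → ℝ) (C : Finset N) : p ⬝ᵥ charVec C = ∑ i ∈ C, p i := by
  simp [dotProduct, charVec, sum_ite_mem]

lemma one_sub_charVec_dotProduct_charVec (C W : Finset N) :
    (1 - charVec C) ⬝ᵥ charVec W = #(W \ C) := by
  rw [dotProduct_charVec, sdiff_eq_filter, card_filter]
  push_cast
  refine sum_congr rfl fun i _ => ?_
  by_cases hi : i ∈ C <;> simp [charVec, hi]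

lemma isCompact_convexHull_charVecsOfValue (v : Finset N → ℕ) (b : ℕ) :
    IsCompact (convexHull ℝ (charVecsOfValue v b)) :=
  Set.Finite.isCompact_convexHull ℝ <| (Set.finite_range charVec).subset <| by
    rintro _ ⟨C, -, rfl⟩
    exact ⟨C, rfl⟩

lemma le_one_of_mem_convexHull_charVecsOfValue {v : Finset N → ℕ} {b : ℕ} {x : N → ℝ}
    (hx : x ∈ convexHull ℝ (charVecsOfValue v b)) : x ≤ 1 := fun i => by
  have := dotProduct_le_of_mem_convexHull (a := Pi.single i (1 : ℝ)) (r := 1) ?_ hx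
  · simpa [single_dotProduct] using this
  rintro _ ⟨C, -, rfl⟩
  by_cases hi : i ∈ C <;> simp [single_dotProduct, charVec, hi]

variable {v : Finset N → ℕ}

lemma one_le_dotProduct_one_sub (hmono : ∀ C S : Finset N, C ⊆ S → v C ≤ v S) {w x : N → ℝ}
    (hw : w ∈ convexHull ℝ (charVecsOfValue v 1)) (hx : x ∈ convexHull ℝ (charVecsOfValue v 0)) :
    1 ≤ w ⬝ᵥ (1 - x) := by
  have hC : ∀ C, v C = 0 → 1 ≤ (1 - charVec C) ⬝ᵥ w := fun C hC =>
    le_dotProduct_of_mem_convexHull (by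
      rintro _ ⟨W, hW, rfl⟩
      rw [one_sub_charVec_dotProduct_charVec]
      have hWC : (W \ C).Nonempty :=
        sdiff_nonempty.mpr fun hsub => by simpa [hW, hC] using hmono W C hsub
      exact_mod_cast hWC.card_pos) hw
  have := dotProduct_le_of_mem_convexHull (a := w) (r := w ⬝ᵥ 1 - 1) (by
    rintro _ ⟨C, hC', rfl⟩
    have := hC C hC'
    rw [sub_dotProduct, dotProduct_comm 1 w, dotProduct_comm (charVec C) w] at this
    linarith) hx
  rw [dotProduct_sub]
  linarith

lemma eq_const_of_card_div_four_smul_le (hmono : ∀ C S : Finset N, C ⊆ S → v C ≤ v S)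
    {t w : N → ℝ} (ht : t ∈ convexHull ℝ (charVecsOfValue v 0))
    (hw : w ∈ convexHull ℝ (charVecsOfValue v 1))
    (hwt : ((Fintype.card N : ℝ) / 4) • w ≤ t) :
    t = (fun _ => 1 / 2) ∧ w = fun _ => 2 / (Fintype.card N : ℝ) := by
  set c := (Fintype.card N : ℝ) / 4 with hc
  have hsep := one_le_dotProduct_one_sub hmono hw ht
  have hN : (Fintype.card N : ℝ) ≠ 0 := fun h0 => by
    have : IsEmpty N := Fintype.card_eq_zero_iff.mp (by exact_mod_cast h0)
    norm_num [dotProduct, univ_eq_empty] at hsep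
  have hkey : c ≤ (c • w) ⬝ᵥ (1 - t) := by
    rw [smul_dotProduct, smul_eq_mul]
    exact le_mul_of_one_le_right (by positivity) hsep
  have ht1 : 0 ≤ 1 - t := sub_nonneg.mpr (le_one_of_mem_convexHull_charVecsOfValue ht)
  have hle : (t - c • w) ⬝ᵥ (1 - t) ≤ 0 := by
    rw [sub_dotProduct]
    linarith [dotProduct_one_sub_le t]
  obtain rfl := eq_half_of_card_div_four_le_dotProduct_one_sub
    (hkey.trans (dotProduct_le_dotProduct_of_nonneg_right hwt ht1))
  refine ⟨rfl, funext fun i => ?_⟩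
  have hzero := (sum_eq_zero_iff_of_nonneg fun j _ =>
    mul_nonneg (sub_nonneg.mpr (hwt j)) (ht1 j)).mp (hle.antisymm (dotProduct_nonneg_of_nonneg
      (sub_nonneg.mpr hwt) ht1)) i (mem_univ i)
  simp only [Pi.sub_apply, Pi.smul_apply, Pi.one_apply, smul_eq_mul, c] at hzero
  field_simp
  linarith

lemma exists_card_div_four_smul_le (hempty : v ∅ = 0) (hfull : v univ = 1)
    (halpha : ∀ p : N → ℝ,
      ((∀ i, 0 ≤ p i) ∧ (∀ C : Finset N, v C = 1 → 1 ≤ ∑ i ∈ C, p i)) →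
      ∃ C : Finset N, v C = 0 ∧ (Fintype.card N : ℝ) / 4 ≤ ∑ i ∈ C, p i) :
    ∃ t ∈ convexHull ℝ (charVecsOfValue v 0), ∃ w ∈ convexHull ℝ (charVecsOfValue v 1),
      ((Fintype.card N : ℝ) / 4) • w ≤ t := by
  set c := (Fintype.card N : ℝ) / 4
  have hsep : ∀ p : N → ℝ, 0 ≤ p → ∃ d ∈ convexHull ℝ (charVecsOfValue v 0) +
      (-c) • convexHull ℝ (charVecsOfValue v 1), 0 ≤ p ⬝ᵥ d := by
    intro p hp
    obtain ⟨W, hW, hmin⟩ := (univ.filter fun C => v C = 1).exists_min_image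
      (fun C => ∑ i ∈ C, p i) ⟨univ, by simp [hfull]⟩
    obtain ⟨C, hC, hle⟩ := exists_losing_card_div_four_mul_le hempty halpha hp
      fun C' hC' => hmin C' (by simp [hC'])
    change c * _ ≤ _ at hle
    refine ⟨charVec C + (-c) • charVec W, Set.add_mem_add
      (subset_convexHull ℝ _ ⟨C, hC, rfl⟩)
      (Set.smul_mem_smul_set (subset_convexHull ℝ _ ⟨W, (mem_filter.mp hW).2, rfl⟩)), ?_⟩
    rw [dotProduct_add, dotProduct_smul, dotProduct_charVec, dotProduct_charVec, smul_eq_mul]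
    linarith
  obtain ⟨_, ⟨t, ht, _, ⟨w, hw, rfl⟩, rfl⟩, hd⟩ :=
    exists_nonneg_mem_of_forall_exists_dotProduct_nonneg
      ((convex_convexHull ℝ _).add ((convex_convexHull ℝ _).smul (-c)))
      ((isCompact_convexHull_charVecsOfValue v 0).add
        ((isCompact_convexHull_charVecsOfValue v 1).smul (-c))) hsep
  exact ⟨t, ht, w, hw, by simpa [← sub_eq_add_neg] using hd⟩

end SimpleGame

theorem convex_hull_conditions_of_critical_threshold_eq_general
    {N : Type*} [Fintype N] [DecidableEq N] (v : Finset N → ℕ)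
    (hmono : ∀ C S : Finset N, C ⊆ S → v C ≤ v S)
    (hempty : v (∅ : Finset N) = 0)
    (hfull : v (Finset.univ : Finset N) = 1)
    (halpha : ∀ p : N → ℝ,
      ((∀ i, 0 ≤ p i) ∧ (∀ C : Finset N, v C = 1 → 1 ≤ ∑ i ∈ C, p i)) →
      ∃ C : Finset N, v C = 0 ∧ (Fintype.card N : ℝ) / 4 ≤ ∑ i ∈ C, p i) :
    (fun _ : N => 2 / (Fintype.card N : ℝ)) ∈
      convexHull ℝ {x : N → ℝ | ∃ C : Finset N, v C = 1 ∧
        x = fun i => if i ∈ C then 1 else 0} ∧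
    (fun _ : N => (1 : ℝ) / 2) ∈
      convexHull ℝ {x : N → ℝ | ∃ C : Finset N, v C = 0 ∧
        x = fun i => if i ∈ C then 1 else 0} := by
  obtain ⟨t, ht, w, hw, hwt⟩ := SimpleGame.exists_card_div_four_smul_le hempty hfull halpha
  obtain ⟨rfl, rfl⟩ := SimpleGame.eq_const_of_card_div_four_smul_le hmono ht hw hwt
  exact ⟨hw, ht⟩

/-- For a simple game `(N, v)` with `n` players: if for every `p ∈ Q(𝒲)` there
exists a losing coalition `C` with `p(C) ≥ n / 4` (i.e. the critical threshold
value `α` equals `n / 4`), then `(2/n)𝟙` lies in the convex hull of the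
characteristic vectors of the winning coalitions and `(1/2)𝟙` lies in the convex
hull of the characteristic vectors of the losing coalitions. -/
theorem convex_hull_conditions_of_critical_threshold_eq
    {N : Type*} [Fintype N] [DecidableEq N] (v : Finset N → ℕ)
    (hv01 : ∀ C, v C = 0 ∨ v C = 1)
    (hmono : ∀ C S : Finset N, C ⊆ S → v C ≤ v S)
    (hempty : v (∅ : Finset N) = 0)
    (hfull : v (Finset.univ : Finset N) = 1)
    (halpha : ∀ p : N → ℝ,
      ((∀ i, 0 ≤ p i) ∧ (∀ C : Finset N, v C = 1 → 1 ≤ ∑ i ∈ C, p i)) →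
      ∃ C : Finset N, v C = 0 ∧ (Fintype.card N : ℝ) / 4 ≤ ∑ i ∈ C, p i) :
    (fun _ : N => 2 / (Fintype.card N : ℝ)) ∈
      convexHull ℝ {x : N → ℝ | ∃ C : Finset N, v C = 1 ∧
        x = fun i => if i ∈ C then 1 else 0} ∧
    (fun _ : N => (1 : ℝ) / 2) ∈
      convexHull ℝ {x : N → ℝ | ∃ C : Finset N, v C = 0 ∧
        x = fun i => if i ∈ C then 1 else 0} :=
  convex_hull_conditions_of_critical_threshold_eq_general v hmono hempty hfull halpha
end

section
/- Let (N, v) be a simple game with n players, collection of winning coalitions 𝒲 and collection of losing coalitions 𝓛. Suppose that for every p ∈ Q(𝒲) there exists a losing coalition C with p(C) ≥ n/4. Then the point of minimum Euclidean norm in Q(𝒲) equals (1/2)𝟙; in particular (1/2)𝟙 ∈ Q(𝒲) and ‖(1/2)𝟙‖₂ ≤ ‖p‖₂ for all p ∈ Q(𝒲). -/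
/-- For a simple game `(N, v)` with `n` players: if for every `p ∈ Q(𝒲)` there
exists a losing coalition `C` with `p(C) ≥ n / 4`, then the point of minimum
Euclidean norm in `Q(𝒲)` equals `(1/2)𝟙`; in particular `(1/2)𝟙 ∈ Q(𝒲)` and
`‖(1/2)𝟙‖₂ ≤ ‖p‖₂` (equivalently `∑ i, (1/2)^2 ≤ ∑ i, p i ^ 2`) for all
`p ∈ Q(𝒲)`. -/
theorem half_one_is_min_norm_point_of_critical_threshold_eq
    {N : Type*} [Fintype N] (v : Finset N → ℕ)
    (hv01 : ∀ C, v C = 0 ∨ v C = 1)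
    (hmono : ∀ C S : Finset N, C ⊆ S → v C ≤ v S)
    (hempty : v (∅ : Finset N) = 0)
    (hfull : v (Finset.univ : Finset N) = 1)
    (halpha : ∀ p : N → ℝ,
      ((∀ i, 0 ≤ p i) ∧ (∀ C : Finset N, v C = 1 → 1 ≤ ∑ i ∈ C, p i)) →
      ∃ C : Finset N, v C = 0 ∧ (Fintype.card N : ℝ) / 4 ≤ ∑ i ∈ C, p i) :
    ((∀ i : N, 0 ≤ ((1 : ℝ) / 2 : ℝ)) ∧
      (∀ C : Finset N, v C = 1 → 1 ≤ ∑ _i ∈ C, ((1 : ℝ) / 2))) ∧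
    ∀ p : N → ℝ,
      ((∀ i, 0 ≤ p i) ∧ (∀ C : Finset N, v C = 1 → 1 ≤ ∑ i ∈ C, p i)) →
      ∑ _i : N, ((1 : ℝ) / 2) ^ 2 ≤ ∑ i, p i ^ 2 := by
  classical
  -- the compact feasible region
  set K : Set (N → ℝ) :=
      {p | (∀ i, p i ∈ Set.Icc (0:ℝ) 1) ∧ ∀ C : Finset N, v C = 1 → 1 ≤ ∑ i ∈ C, p i}
      with hKdef
  have hwin_ne : ∀ C : Finset N, v C = 1 → C.Nonempty := by
    intro C hC
    rcases C.eq_empty_or_nonempty with h | h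
    · subst h; rw [hempty] at hC; exact absurd hC (by decide)
    · exact h
  have hone : (fun _ : N => (1:ℝ)) ∈ K := by
    refine ⟨fun i => ⟨le_refl _ |>.trans zero_le_one, le_refl 1⟩, fun C hC => ?_⟩
    rw [Finset.sum_const, nsmul_eq_mul, mul_one]
    exact_mod_cast Nat.one_le_iff_ne_zero.mpr (Finset.card_ne_zero_of_mem (hwin_ne C hC).choose_spec)
  -- K is compact
  have hKeq : K = (Set.univ.pi fun _ : N => Set.Icc (0:ℝ) 1) ∩
      (⋂ (C : Finset N) (_ : v C = 1), {p : N → ℝ | 1 ≤ ∑ i ∈ C, p i}) := by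
    ext p
    simp only [hKdef, Set.mem_setOf_eq, Set.mem_inter_iff, Set.mem_pi, Set.mem_univ,
      true_implies, Set.mem_iInter]
  have hKclosed : IsClosed K := by
    rw [hKeq]
    refine (isClosed_set_pi fun i _ => isClosed_Icc).inter ?_
    refine isClosed_iInter fun C => isClosed_iInter fun _ => ?_
    exact isClosed_le continuous_const (continuous_finset_sum _ fun i _ => continuous_apply i)
  have hKcompact : IsCompact K := by
    have hbox : IsCompact (Set.univ.pi fun _ : N => Set.Icc (0:ℝ) 1) :=
      isCompact_univ_pi fun _ => isCompact_Icc
    refine hbox.of_isClosed_subset hKclosed ?_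
    rw [hKeq]; exact Set.inter_subset_left
  -- minimizer of the squared norm on K
  obtain ⟨x, hxK, hxmin⟩ := hKcompact.exists_isMinOn ⟨_, hone⟩
    ((continuous_finset_sum Finset.univ fun i _ => (continuous_apply i).pow 2).continuousOn
      (f := fun p : N → ℝ => ∑ i, p i ^ 2))
  have hxmin' : ∀ q ∈ K, ∑ i, x i ^ 2 ≤ ∑ i, q i ^ 2 := fun q hq => hxmin hq
  -- variational inequality
  have hvar : ∀ q ∈ K, 0 ≤ ∑ i, x i * (q i - x i) := by
    intro q hq
    set S : ℝ := ∑ i, x i * (q i - x i) with hS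
    set T : ℝ := ∑ i, (q i - x i) ^ 2 with hT
    have hT0 : 0 ≤ T := Finset.sum_nonneg fun i _ => sq_nonneg _
    have hstep : ∀ t : ℝ, 0 < t → t ≤ 1 → 0 ≤ 2 * S + t * T := by
      intro t ht ht1
      have hz : (fun i => x i + t * (q i - x i)) ∈ K := by
        constructor
        · intro i
          obtain ⟨hx0, hx1⟩ := hxK.1 i
          obtain ⟨hq0, hq1⟩ := hq.1 i
          constructor
          · show (0:ℝ) ≤ x i + t * (q i - x i)
            nlinarith [mul_nonneg ht.le hq0, mul_nonneg (sub_nonneg.mpr ht1) hx0]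
          · show x i + t * (q i - x i) ≤ 1
            nlinarith [mul_nonneg ht.le (sub_nonneg.mpr hq1),
              mul_nonneg (sub_nonneg.mpr ht1) (sub_nonneg.mpr hx1)]
        · intro C hC
          have h1 := hxK.2 C hC
          have h2 := hq.2 C hC
          have : ∑ i ∈ C, (x i + t * (q i - x i))
              = ∑ i ∈ C, x i + t * (∑ i ∈ C, q i - ∑ i ∈ C, x i) := by
            rw [Finset.sum_add_distrib, ← Finset.mul_sum, Finset.sum_sub_distrib]
          rw [this]; nlinarith
      have hle := hxmin' _ hz
      have hexp : ∑ i, (x i + t * (q i - x i)) ^ 2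
          = ∑ i, x i ^ 2 + t * (2 * S) + t ^ 2 * T := by
        rw [hS, hT, Finset.mul_sum, Finset.mul_sum, Finset.mul_sum, ← Finset.sum_add_distrib,
          ← Finset.sum_add_distrib]
        exact Finset.sum_congr rfl fun i _ => by ring
      rw [hexp] at hle
      nlinarith
    by_contra hneg
    push_neg at hneg
    rcases eq_or_lt_of_le hT0 with hTz | hTpos
    · have := hstep 1 one_pos le_rfl
      rw [← hTz] at this; linarith
    · rcases le_or_gt (-S / T) 1 with hcase | hcase
      · have htpos : 0 < -S / T := div_pos (by linarith) hTpos
        have := hstep _ htpos hcase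
        rw [div_mul_cancel₀ _ (ne_of_gt hTpos)] at this
        linarith
      · have := hstep 1 one_pos le_rfl
        have hTS : T < -S := (one_lt_div hTpos).mp hcase
        linarith
  -- apply halpha to x
  obtain ⟨L, hL0, hLsum⟩ := halpha x ⟨fun i => (hxK.1 i).1, hxK.2⟩
  -- indicator of complement of L is feasible
  set q : N → ℝ := fun i => if i ∈ L then 0 else 1 with hq
  have hqK : q ∈ K := by
    constructor
    · intro i; by_cases h : i ∈ L <;> simp [hq, h]
    · intro C hC
      have hnsub : ¬ C ⊆ L := by
        intro h
        have := hmono C L h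
        omega
      obtain ⟨j, hjC, hjL⟩ := Finset.not_subset.mp hnsub
      have : q j ≤ ∑ i ∈ C, q i := by
        refine Finset.single_le_sum (fun i _ => ?_) hjC
        by_cases h : i ∈ L <;> simp [hq, h]
      simpa [hq, hjL] using this
  have hvq := hvar q hqK
  -- compute the variational inequality for this q
  have hxq : ∑ i, x i * q i = ∑ i, x i - ∑ i ∈ L, x i := by
    have hsplit : ∑ i ∈ (Finset.univ : Finset N) \ L, x i * q i + ∑ i ∈ L, x i * q i
        = ∑ i, x i * q i := Finset.sum_sdiff (Finset.subset_univ L)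
    have h1 : ∑ i ∈ L, x i * q i = 0 :=
      Finset.sum_eq_zero fun i hi => by simp [hq, hi]
    have h2 : ∑ i ∈ (Finset.univ : Finset N) \ L, x i * q i
        = ∑ i ∈ (Finset.univ : Finset N) \ L, x i :=
      Finset.sum_congr rfl fun i hi => by
        simp [hq, (Finset.mem_sdiff.mp hi).2]
    rw [← hsplit, h1, h2, add_zero, Finset.sum_sdiff_eq_sub (Finset.subset_univ L)]
  have hkey : ∑ i, x i ^ 2 + ∑ i ∈ L, x i ≤ ∑ i, x i := by
    have : ∑ i, x i * (q i - x i) = ∑ i, x i * q i - ∑ i, x i ^ 2 := by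
      rw [← Finset.sum_sub_distrib]
      exact Finset.sum_congr rfl fun i _ => by ring
    rw [this, hxq] at hvq
    linarith
  -- pointwise bound x i - x i ^ 2 ≤ 1/4, with total equal to n/4
  have hsum14 : ∑ _i : N, (1/4 : ℝ) = (Fintype.card N : ℝ) / 4 := by
    rw [Finset.sum_const, nsmul_eq_mul, Finset.card_univ]; ring
  have hub : ∑ i, (x i - x i ^ 2) ≤ ∑ _i : N, (1/4 : ℝ) :=
    Finset.sum_le_sum fun i _ => by nlinarith [sq_nonneg (x i - 1/2)]
  have hlb : (Fintype.card N : ℝ) / 4 ≤ ∑ i, (x i - x i ^ 2) := by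
    rw [Finset.sum_sub_distrib]
    linarith
  have hxhalf : ∀ i, x i = 1/2 := by
    by_contra h
    push_neg at h
    obtain ⟨j, hj⟩ := h
    have hjlt : x j - x j ^ 2 < 1/4 := by
      have : (0:ℝ) < (x j - 1/2) ^ 2 :=
        lt_of_le_of_ne (sq_nonneg _) (Ne.symm (pow_ne_zero 2 (sub_ne_zero.mpr hj)))
      nlinarith
    have : ∑ i, (x i - x i ^ 2) < ∑ _i : N, (1/4 : ℝ) :=
      Finset.sum_lt_sum (fun i _ => by nlinarith [sq_nonneg (x i - 1/2)])
        ⟨j, Finset.mem_univ j, hjlt⟩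
    rw [hsum14] at this
    linarith
  refine ⟨⟨fun _ => by norm_num, fun C hC => ?_⟩, fun p hp => ?_⟩
  · have : ∑ _i ∈ C, ((1:ℝ)/2) = ∑ i ∈ C, x i :=
      Finset.sum_congr rfl fun i _ => (hxhalf i).symm
    rw [this]
    exact hxK.2 C hC
  · obtain ⟨hp0, hpw⟩ := hp
    set r : N → ℝ := fun i => min (p i) 1 with hr
    have hrK : r ∈ K := by
      constructor
      · exact fun i => ⟨le_min (hp0 i) zero_le_one, min_le_right _ _⟩
      · intro C hC
        by_cases hbig : ∃ j ∈ C, 1 ≤ p j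
        · obtain ⟨j, hjC, hjp⟩ := hbig
          have h1 : r j = 1 := min_eq_right hjp
          have : r j ≤ ∑ i ∈ C, r i :=
            Finset.single_le_sum (fun i _ => le_min (hp0 i) zero_le_one) hjC
          rw [h1] at this; exact this
        · push_neg at hbig
          have : ∑ i ∈ C, r i = ∑ i ∈ C, p i :=
            Finset.sum_congr rfl fun i hi => min_eq_left (le_of_lt (hbig i hi))
          rw [this]; exact hpw C hC
    have h1 : ∑ i, x i ^ 2 ≤ ∑ i, r i ^ 2 := hxmin' r hrK
    have h2 : ∑ i, r i ^ 2 ≤ ∑ i, p i ^ 2 :=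
      Finset.sum_le_sum fun i _ =>
        pow_le_pow_left₀ (le_min (hp0 i) zero_le_one) (min_le_left _ _) 2
    have h3 : ∑ _i : N, ((1:ℝ)/2) ^ 2 = ∑ i, x i ^ 2 :=
      Finset.sum_congr rfl fun i _ => by rw [hxhalf i]
    rw [h3]
    exact le_trans h1 h2
end

section
/- Let (N, v) be a simple game with n players, collection of winning coalitions 𝒲 and collection of losing coalitions 𝓛. Let q⋆ be the point of minimum Euclidean norm in the convex hull of the 0/1 vectors contained in Q(𝒲) (equivalently, of the characteristic vectors of covers of 𝒲). Then q⋆ ∈ Q(𝒲) and for every losing coalition C one has q⋆(C) ≤ n/4 − ‖(1/2)𝟙 − q⋆‖₂². In particular, the critical threshold value satisfies α ≤ n/4 − ‖(1/2)𝟙 − q⋆‖₂². -/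
/-- For a simple game `(N, v)` with `n` players: let `q⋆` be the point of minimum
Euclidean norm in the convex hull of the `0/1`-vectors contained in `Q(𝒲)`
(equivalently, of the characteristic vectors of covers of `𝒲`).  Then
`q⋆ ∈ Q(𝒲)` and for every losing coalition `C` one has
`q⋆(C) ≤ n / 4 - ‖(1/2)𝟙 - q⋆‖₂²`; in particular the critical threshold value
satisfies `α ≤ n / 4 - ‖(1/2)𝟙 - q⋆‖₂²`. -/
theorem min_norm_point_of_zero_one_hull_bounds_losing
    {N : Type*} [Fintype N] (v : Finset N → ℕ)
    (hv01 : ∀ C, v C = 0 ∨ v C = 1)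
    (hmono : ∀ C S : Finset N, C ⊆ S → v C ≤ v S)
    (hempty : v (∅ : Finset N) = 0)
    (hfull : v (Finset.univ : Finset N) = 1)
    (qstar : N → ℝ)
    (hmem : qstar ∈ convexHull ℝ {x : N → ℝ | (∀ i, x i = 0 ∨ x i = 1) ∧
      (∀ i, 0 ≤ x i) ∧ (∀ C : Finset N, v C = 1 → 1 ≤ ∑ i ∈ C, x i)})
    (hmin : ∀ q ∈ convexHull ℝ {x : N → ℝ | (∀ i, x i = 0 ∨ x i = 1) ∧
      (∀ i, 0 ≤ x i) ∧ (∀ C : Finset N, v C = 1 → 1 ≤ ∑ i ∈ C, x i)},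
      ∑ i, qstar i ^ 2 ≤ ∑ i, q i ^ 2) :
    ((∀ i, 0 ≤ qstar i) ∧
      (∀ C : Finset N, v C = 1 → 1 ≤ ∑ i ∈ C, qstar i)) ∧
    ∀ C : Finset N, v C = 0 →
      ∑ i ∈ C, qstar i
        ≤ (Fintype.card N : ℝ) / 4 - ∑ i, (1 / 2 - qstar i) ^ 2 := by
  classical
  set S : Set (N → ℝ) := {x : N → ℝ | (∀ i, x i = 0 ∨ x i = 1) ∧
      (∀ i, 0 ≤ x i) ∧ (∀ C : Finset N, v C = 1 → 1 ≤ ∑ i ∈ C, x i)} with hS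
  set K : Set (N → ℝ) := {x : N → ℝ |
      (∀ i, 0 ≤ x i) ∧ (∀ C : Finset N, v C = 1 → 1 ≤ ∑ i ∈ C, x i)} with hK
  have hSK : S ⊆ K := fun x hx => ⟨hx.2.1, hx.2.2⟩
  have hKconv : Convex ℝ K := by
    intro x hx y hy a b ha hb hab
    constructor
    · intro i
      have := hx.1 i; have := hy.1 i
      simp only [Pi.add_apply, Pi.smul_apply, smul_eq_mul]
      positivity
    · intro C hC
      have h1 := hx.2 C hC
      have h2 := hy.2 C hC
      simp only [Pi.add_apply, Pi.smul_apply, smul_eq_mul]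
      rw [Finset.sum_add_distrib, ← Finset.mul_sum, ← Finset.mul_sum]
      nlinarith [mul_le_mul_of_nonneg_left h1 ha, mul_le_mul_of_nonneg_left h2 hb]
  have hqK : qstar ∈ K := convexHull_min hSK hKconv hmem
  refine ⟨⟨hqK.1, hqK.2⟩, ?_⟩
  intro C hC
  -- indicator of the complement of C
  set x : N → ℝ := fun i => if i ∈ C then 0 else 1 with hxdef
  have hxS : x ∈ S := by
    refine ⟨fun i => ?_, fun i => ?_, fun W hW => ?_⟩
    · by_cases h : i ∈ C <;> simp [hxdef, h]
    · by_cases h : i ∈ C <;> simp [hxdef, h]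
    · -- W not a subset of C
      have hWC : ¬ W ⊆ C := by
        intro hsub
        have := hmono W C hsub
        omega
      obtain ⟨i0, hi0W, hi0C⟩ := Finset.not_subset.mp hWC
      have h1 : x i0 = 1 := by simp [hxdef, hi0C]
      calc (1:ℝ) = x i0 := h1.symm
        _ ≤ ∑ i ∈ W, x i := Finset.single_le_sum
              (fun i _ => by by_cases h : i ∈ C <;> simp [hxdef, h]) hi0W
  have hxhull : x ∈ convexHull ℝ S := subset_convexHull ℝ S hxS
  set A : ℝ := ∑ i, qstar i * (x i - qstar i) with hA
  set B : ℝ := ∑ i, (x i - qstar i) ^ 2 with hB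
  have hBnn : 0 ≤ B := Finset.sum_nonneg fun i _ => sq_nonneg _
  have hineq : ∀ t : ℝ, 0 < t → t ≤ 1 → 0 ≤ 2 * A + t * B := by
    intro t ht ht1
    have hmemt : (1 - t) • qstar + t • x ∈ convexHull ℝ S :=
      (convex_convexHull ℝ S) hmem hxhull (by linarith) ht.le (by ring)
    have h := hmin _ hmemt
    have hexp : ∑ i, ((1 - t) • qstar + t • x) i ^ 2
        = ∑ i, qstar i ^ 2 + t * (2 * A) + t ^ 2 * B := by
      simp only [Pi.add_apply, Pi.smul_apply, smul_eq_mul, hA, hB,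
        Finset.mul_sum, ← Finset.sum_add_distrib]
      exact Finset.sum_congr rfl fun i _ => by ring
    rw [hexp] at h
    have h' : 0 ≤ t * (2 * A) + t ^ 2 * B := by linarith
    nlinarith
  have hAnn : 0 ≤ A := by
    by_contra hneg
    push_neg at hneg
    set t : ℝ := min 1 ((-A) / (B + 1)) with ht
    have htpos : 0 < t := lt_min one_pos (div_pos (by linarith) (by linarith))
    have ht1 : t ≤ 1 := min_le_left _ _
    have h := hineq t htpos ht1
    have htB : t * B ≤ -A := by
      have h2 : t ≤ (-A) / (B + 1) := min_le_right _ _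
      have h3 : t * B ≤ ((-A) / (B + 1)) * B :=
        mul_le_mul_of_nonneg_right h2 hBnn
      have h4 : ((-A) / (B + 1)) * B ≤ -A := by
        rw [div_mul_eq_mul_div, div_le_iff₀ (by linarith)]
        nlinarith
      linarith
    linarith
  -- A ≥ 0 means ∑ q² ≤ ∑_{i∉C} q
  have hsplit : ∑ i, qstar i * x i = ∑ i ∈ Cᶜ, qstar i := by
    rw [← Finset.sum_add_sum_compl C]
    have h1 : ∑ i ∈ C, qstar i * x i = 0 :=
      Finset.sum_eq_zero fun i hi => by simp [hxdef, hi]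
    have h2 : ∑ i ∈ Cᶜ, qstar i * x i = ∑ i ∈ Cᶜ, qstar i :=
      Finset.sum_congr rfl fun i hi => by
        simp [hxdef, Finset.mem_compl.mp hi]
    rw [h1, h2, zero_add]
  have hkey : ∑ i, qstar i ^ 2 ≤ ∑ i ∈ Cᶜ, qstar i := by
    have : A = ∑ i, qstar i * x i - ∑ i, qstar i ^ 2 := by
      rw [hA, ← Finset.sum_sub_distrib]
      exact Finset.sum_congr rfl fun i _ => by ring
    rw [this, hsplit] at hAnn
    linarith
  have f1 : ∑ i ∈ C, qstar i + ∑ i ∈ Cᶜ, qstar i = ∑ i, qstar i :=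
    Finset.sum_add_sum_compl C _
  have f2 : ∑ i, (1 / 2 - qstar i) ^ 2
      = (Fintype.card N : ℝ) / 4 - ∑ i, qstar i + ∑ i, qstar i ^ 2 := by
    have h : ∀ i : N, (1 / 2 - qstar i) ^ 2 = 1 / 4 - qstar i + qstar i ^ 2 :=
      fun i => by ring
    simp only [h, Finset.sum_add_distrib, Finset.sum_sub_distrib,
      Finset.sum_const, Finset.card_univ, nsmul_eq_mul]
    ring
  linarith
end

section
/- Let n be even, N = {1, 2, …, n}, and let v : 2^N → {0,1} be defined by v(C) = 1 if {2i−1, 2i} ⊆ C for some i ∈ {1, …, n/2}, and v(C) = 0 otherwise. Then (2/n)𝟙 lies in the convex hull of the characteristic vectors of the winning coalitions of (N, v), and (1/2)𝟙 lies in the convex hull of the characteristic vectors of the losing coalitions of (N, v). Consequently, the critical threshold value of this game equals n/4. -/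
open scoped Classical

/-- For the example of Freixas and Kurz with an even number `n` of players
`N = {1, …, n}` (modelled as `Fin n`, so the pairs `{2i-1, 2i}` become the pairs
`{j, j+1}` with `j` even) and `v(C) = 1` iff `C` contains some such pair:
`(2/n)𝟙` lies in the convex hull of the characteristic vectors of the winning
coalitions, `(1/2)𝟙` lies in the convex hull of the characteristic vectors of
the losing coalitions, and consequently the critical threshold value of this
game equals `n / 4`. -/
theorem pair_game_critical_threshold_eq_n_div_four
    (n : ℕ) (hn : 0 < n) (hev : Even n)
    (v : Finset (Fin n) → ℕ)
    (hv : ∀ C : Finset (Fin n),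
      v C = if ∃ i j : Fin n, i ∈ C ∧ j ∈ C ∧ (j : ℕ) = (i : ℕ) + 1 ∧
        (i : ℕ) % 2 = 0 then 1 else 0) :
    ((fun _ : Fin n => 2 / (n : ℝ)) ∈
      convexHull ℝ {x : Fin n → ℝ | ∃ C : Finset (Fin n), v C = 1 ∧
        x = fun i => if i ∈ C then 1 else 0}) ∧
    ((fun _ : Fin n => (1 : ℝ) / 2) ∈
      convexHull ℝ {x : Fin n → ℝ | ∃ C : Finset (Fin n), v C = 0 ∧
        x = fun i => if i ∈ C then 1 else 0}) ∧
    (∀ p : Fin n → ℝ,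
      ((∀ i, 0 ≤ p i) ∧ (∀ C : Finset (Fin n), v C = 1 → 1 ≤ ∑ i ∈ C, p i)) →
      ∃ C : Finset (Fin n), v C = 0 ∧ (n : ℝ) / 4 ≤ ∑ i ∈ C, p i) ∧
    (∃ p : Fin n → ℝ,
      ((∀ i, 0 ≤ p i) ∧ (∀ C : Finset (Fin n), v C = 1 → 1 ≤ ∑ i ∈ C, p i)) ∧
      ∀ C : Finset (Fin n), v C = 0 → ∑ i ∈ C, p i ≤ (n : ℝ) / 4) := by
  have hn2 : n % 2 = 0 := Nat.even_iff.mp hev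
  -- the pairs
  set P : ℕ → Finset (Fin n) :=
    fun k => Finset.univ.filter (fun j : Fin n => (j : ℕ) / 2 = k) with hP
  have hPmem : ∀ (k : ℕ) (i : Fin n), i ∈ P k ↔ (i : ℕ) / 2 = k := by
    intro k i; simp [hP]
  have hPwin : ∀ k : ℕ, ∀ _ : k < n / 2, v (P k) = 1 := by
    intro k hk
    rw [hv]
    rw [if_pos]
    exact ⟨⟨2 * k, by omega⟩, ⟨2 * k + 1, by omega⟩,
      (hPmem k _).mpr (show 2 * k / 2 = k by omega),
      (hPmem k _).mpr (show (2 * k + 1) / 2 = k by omega),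
      rfl, show 2 * k % 2 = 0 by omega⟩
  have hPsum : ∀ (f : Fin n → ℝ) (k : ℕ), ∀ _ : k < n / 2,
      ∑ i ∈ P k, f i = f ⟨2 * k, by omega⟩ + f ⟨2 * k + 1, by omega⟩ := by
    intro f k hk
    have hpair : P k = {(⟨2 * k, by omega⟩ : Fin n), (⟨2 * k + 1, by omega⟩ : Fin n)} := by
      ext x
      simp only [hPmem, Finset.mem_insert, Finset.mem_singleton, Fin.ext_iff]
      omega
    rw [hpair, Finset.sum_pair (by simp [Fin.ext_iff])]
  -- evens and odds
  set E : Finset (Fin n) := Finset.univ.filter (fun j : Fin n => (j : ℕ) % 2 = 0) with hE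
  set O : Finset (Fin n) := Finset.univ.filter (fun j : Fin n => ¬ (j : ℕ) % 2 = 0) with hO
  have hvE : v E = 0 := by
    rw [hv, if_neg]
    rintro ⟨i, j, hi, hj, hij, hie⟩
    simp [hE] at hi hj
    omega
  have hvO : v O = 0 := by
    rw [hv, if_neg]
    rintro ⟨i, j, hi, hj, hij, hie⟩
    simp [hO] at hi hj
    omega
  have hcast : ((n / 2 : ℕ) : ℝ) = (n : ℝ) / 2 := by
    obtain ⟨m, hm⟩ := hev
    subst hm
    have h1 : (m + m) / 2 = m := by omega
    rw [h1]; push_cast; ring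
  refine ⟨?_, ?_, ?_, ?_⟩
  · -- (2/n)𝟙 in convex hull of winning vectors
    have hz : ∀ k ∈ Finset.range (n / 2),
        (fun i : Fin n => if i ∈ P k then (1 : ℝ) else 0) ∈
          {x : Fin n → ℝ | ∃ C : Finset (Fin n), v C = 1 ∧
            x = fun i => if i ∈ C then 1 else 0} :=
      fun k hk => ⟨P k, hPwin k (Finset.mem_range.mp hk), rfl⟩
    have hcm := Finset.centerMass_mem_convexHull (t := Finset.range (n / 2))
      (w := fun _ => (1 : ℝ))
      (z := fun k => fun i : Fin n => if i ∈ P k then (1 : ℝ) else 0)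
      (fun _ _ => zero_le_one)
      (by
        simp only [Finset.sum_const, Finset.card_range, nsmul_eq_mul, mul_one]
        have : 0 < n / 2 := by omega
        exact_mod_cast this)
      hz
    have heq : (Finset.range (n / 2)).centerMass (fun _ => (1 : ℝ))
        (fun k => fun i : Fin n => if i ∈ P k then (1 : ℝ) else 0)
        = fun _ : Fin n => 2 / (n : ℝ) := by
      funext i
      have hlt : (i : ℕ) / 2 ∈ Finset.range (n / 2) :=
        Finset.mem_range.mpr (by have := i.isLt; omega)
      rw [Finset.centerMass]
      simp only [Finset.sum_const, Finset.card_range, nsmul_eq_mul, mul_one, one_smul,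
        Pi.smul_apply, Finset.sum_apply, smul_eq_mul]
      have hsum1 : (∑ k ∈ Finset.range (n / 2),
          if i ∈ P k then (1 : ℝ) else 0) = 1 := by
        have : ∀ k ∈ Finset.range (n / 2),
            (if i ∈ P k then (1 : ℝ) else 0) = if (i : ℕ) / 2 = k then 1 else 0 := by
          intro k _; simp [hPmem]
        rw [Finset.sum_congr rfl this, Finset.sum_ite_eq]
        simp [hlt]
      rw [hsum1, hcast]
      have hnpos : (0 : ℝ) < n := by exact_mod_cast hn
      field_simp
    rw [← heq]
    exact hcm
  · -- (1/2)𝟙 in convex hull of losing vectors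
    have hmemE : (fun i : Fin n => if i ∈ E then (1 : ℝ) else 0) ∈
        convexHull ℝ {x : Fin n → ℝ | ∃ C : Finset (Fin n), v C = 0 ∧
          x = fun i => if i ∈ C then 1 else 0} :=
      subset_convexHull ℝ _ ⟨E, hvE, rfl⟩
    have hmemO : (fun i : Fin n => if i ∈ O then (1 : ℝ) else 0) ∈
        convexHull ℝ {x : Fin n → ℝ | ∃ C : Finset (Fin n), v C = 0 ∧
          x = fun i => if i ∈ C then 1 else 0} :=
      subset_convexHull ℝ _ ⟨O, hvO, rfl⟩
    have hcomb := (convex_convexHull ℝ _) hmemE hmemO (by norm_num : (0:ℝ) ≤ 1/2)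
      (by norm_num : (0:ℝ) ≤ 1/2) (by norm_num)
    have heq : (1/2 : ℝ) • (fun i : Fin n => if i ∈ E then (1 : ℝ) else 0)
        + (1/2 : ℝ) • (fun i : Fin n => if i ∈ O then (1 : ℝ) else 0)
        = fun _ : Fin n => (1 : ℝ) / 2 := by
      funext i
      by_cases h : (i : ℕ) % 2 = 0 <;> simp [hE, hO, h]
    rw [← heq]
    exact hcomb
  · -- lower bound: every feasible p has a losing coalition with p(C) ≥ n/4
    rintro p ⟨hp0, hpw⟩
    have hsplit : ∑ i ∈ E, p i + ∑ i ∈ O, p i = ∑ i, p i :=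
      Finset.sum_filter_add_sum_filter_not Finset.univ _ p
    have hdisj : (↑(Finset.range (n / 2)) : Set ℕ).PairwiseDisjoint P := by
      intro a _ b _ hab
      simp only [Finset.disjoint_left]
      intro x hx hx'
      rw [hPmem] at hx hx'
      exact hab (hx ▸ hx')
    have hpart : (Finset.univ : Finset (Fin n)) = (Finset.range (n / 2)).biUnion P := by
      ext i
      simp only [Finset.mem_univ, Finset.mem_biUnion, Finset.mem_range, hPmem, true_iff]
      exact ⟨(i : ℕ) / 2, by have := i.isLt; omega, rfl⟩
    have htot : (n : ℝ) / 2 ≤ ∑ i, p i := by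
      rw [hpart, Finset.sum_biUnion hdisj]
      calc (n : ℝ) / 2 = ∑ _k ∈ Finset.range (n / 2), (1 : ℝ) := by
            simp [hcast]
        _ ≤ ∑ k ∈ Finset.range (n / 2), ∑ i ∈ P k, p i := by
            apply Finset.sum_le_sum
            intro k hk
            exact hpw (P k) (hPwin k (Finset.mem_range.mp hk))
    by_cases hc : (n : ℝ) / 4 ≤ ∑ i ∈ E, p i
    · exact ⟨E, hvE, hc⟩
    · exact ⟨O, hvO, by linarith⟩
  · -- upper bound: p = (1/2)𝟙 is feasible and p(C) ≤ n/4 for all losing C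
    refine ⟨fun _ => 1 / 2, ⟨fun i => by norm_num, ?_⟩, ?_⟩
    · intro C hC
      by_cases h : ∃ i j : Fin n, i ∈ C ∧ j ∈ C ∧ (j : ℕ) = (i : ℕ) + 1 ∧
          (i : ℕ) % 2 = 0
      · obtain ⟨i, j, hi, hj, hij, _⟩ := h
        have hne : i ≠ j := by
          intro h'; rw [h'] at hij; omega
        have h2 : 1 < C.card := Finset.one_lt_card.mpr ⟨i, hi, j, hj, hne⟩
        rw [Finset.sum_const, nsmul_eq_mul]
        have h2' : (2 : ℝ) ≤ (C.card : ℝ) := by exact_mod_cast h2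
        linarith
      · rw [hv C, if_neg h] at hC
        exact absurd hC (by norm_num)
    · intro C hC
      have hno : ¬ ∃ i j : Fin n, i ∈ C ∧ j ∈ C ∧ (j : ℕ) = (i : ℕ) + 1 ∧
          (i : ℕ) % 2 = 0 := by
        intro hex
        rw [hv C, if_pos hex] at hC
        exact absurd hC one_ne_zero
      have hcard : C.card ≤ n / 2 := by
        have hbd := Finset.card_le_card_of_injOn (s := C)
          (f := fun j : Fin n => (j : ℕ) / 2)
          (t := Finset.range (n / 2))
          (fun j _ => Finset.mem_range.mpr
            (show (j : ℕ) / 2 < n / 2 by have := j.isLt; omega)) ?_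
        · simpa using hbd
        · intro a ha b hb hab
          by_contra hne
          have hne' : (a : ℕ) ≠ (b : ℕ) := fun h => hne (Fin.ext h)
          have hcases : ((b : ℕ) = (a : ℕ) + 1 ∧ (a : ℕ) % 2 = 0) ∨
              ((a : ℕ) = (b : ℕ) + 1 ∧ (b : ℕ) % 2 = 0) := by
            simp only at hab
            omega
          rcases hcases with ⟨h1, h2⟩ | ⟨h1, h2⟩
          · exact hno ⟨a, b, ha, hb, h1, h2⟩
          · exact hno ⟨b, a, hb, ha, h1, h2⟩
      rw [Finset.sum_const, nsmul_eq_mul]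
      have h1 : (C.card : ℝ) ≤ ((n / 2 : ℕ) : ℝ) := by exact_mod_cast hcard
      rw [hcast] at h1
      linarith
end
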